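/- Infinite-horizon L₂-gain of the closed loop (gain part of Lemma 1): let X ⊆ ℝⁿ, let V : ℝⁿ → ℝ be continuously differentiable, nonnegative on X, and satisfy the HJI equation at every point of X. Let f, g, k, h be continuous, let w : [0, ∞) → ℝ^q be continuous with ∫₀^∞ ‖w(t)‖² dt < ∞, and let x : [0, ∞) → ℝⁿ be differentiable with x(t) ∈ X and x'(t) = f(x(t)) + g(x(t))·u_V(x(t)) + k(x(t))·w(t) for all t ≥ 0, with V(x(0)) = 0. Then the nonnegative function t ↦ ‖h(x(t))‖² + ⟨u_V(x(t)), R·u_V(x(t))⟩ is integrable on [0, ∞) and ∫₀^∞ (‖h(x(t))‖² + ⟨u_V(x(t)), R·u_V(x(t))⟩) dt ≤ γ² · ∫₀^∞ ‖w(t)‖² dt; that is, the closed-loop system with the state feedback u = u_V has L₂-gain less than or equal to γ. -/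

import Mathlib

open Matrix

/-- Matrix–vector multiplication, valued in Euclidean space. -/
noncomputable def mv {a b : ℕ} (M : Matrix (Fin a) (Fin b) ℝ)
    (v : EuclideanSpace ℝ (Fin b)) : EuclideanSpace ℝ (Fin a) :=
  WithLp.toLp 2 (M.mulVec v)

/-- The control policy `u_V(x) = -(1/2) R⁻¹ g(x)ᵀ ∇V(x)`. -/
noncomputable def uPol {n m : ℕ}
    (g : EuclideanSpace ℝ (Fin n) → Matrix (Fin n) (Fin m) ℝ)
    (R : Matrix (Fin m) (Fin m) ℝ)
    (V : EuclideanSpace ℝ (Fin n) → ℝ)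
    (x : EuclideanSpace ℝ (Fin n)) : EuclideanSpace ℝ (Fin m) :=
  (-(1/2 : ℝ)) • mv R⁻¹ (mv (g x)ᵀ (gradient V x))

/-- The disturbance policy `w_V(x) = (1/(2γ²)) k(x)ᵀ ∇V(x)`. -/
noncomputable def wPol {n q : ℕ}
    (k : EuclideanSpace ℝ (Fin n) → Matrix (Fin n) (Fin q) ℝ)
    (γ : ℝ)
    (V : EuclideanSpace ℝ (Fin n) → ℝ)
    (x : EuclideanSpace ℝ (Fin n)) : EuclideanSpace ℝ (Fin q) :=
  (1/(2*γ^2)) • mv (k x)ᵀ (gradient V x)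

/-- The Hamiltonian `H_V(x,u,w)`. -/
noncomputable def Ham {n m q p : ℕ}
    (f : EuclideanSpace ℝ (Fin n) → EuclideanSpace ℝ (Fin n))
    (g : EuclideanSpace ℝ (Fin n) → Matrix (Fin n) (Fin m) ℝ)
    (k : EuclideanSpace ℝ (Fin n) → Matrix (Fin n) (Fin q) ℝ)
    (h : EuclideanSpace ℝ (Fin n) → EuclideanSpace ℝ (Fin p))
    (R : Matrix (Fin m) (Fin m) ℝ) (γ : ℝ)
    (V : EuclideanSpace ℝ (Fin n) → ℝ)
    (x : EuclideanSpace ℝ (Fin n))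
    (u : EuclideanSpace ℝ (Fin m)) (w : EuclideanSpace ℝ (Fin q)) : ℝ :=
  (inner ℝ (gradient V x) (f x + mv (g x) u + mv (k x) w) : ℝ)
    + ‖h x‖^2 + (inner ℝ u (mv R u) : ℝ) - γ^2 * ‖w‖^2

/-- `V` satisfies the HJI equation at `x`. -/
def HJIAt {n m q p : ℕ}
    (f : EuclideanSpace ℝ (Fin n) → EuclideanSpace ℝ (Fin n))
    (g : EuclideanSpace ℝ (Fin n) → Matrix (Fin n) (Fin m) ℝ)
    (k : EuclideanSpace ℝ (Fin n) → Matrix (Fin n) (Fin q) ℝ)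
    (h : EuclideanSpace ℝ (Fin n) → EuclideanSpace ℝ (Fin p))
    (R : Matrix (Fin m) (Fin m) ℝ) (γ : ℝ)
    (V : EuclideanSpace ℝ (Fin n) → ℝ)
    (x : EuclideanSpace ℝ (Fin n)) : Prop :=
  (inner ℝ (gradient V x) (f x) : ℝ) + ‖h x‖^2
    - (1/4) * (inner ℝ (mv (g x)ᵀ (gradient V x)) (mv R⁻¹ (mv (g x)ᵀ (gradient V x))) : ℝ)
    + (1/(4*γ^2)) * ‖mv (k x)ᵀ (gradient V x)‖^2 = 0

/-!
Completing the square in the Hamiltonian shows that, wherever the HJI equation holds, the closed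
loop with feedback `u_V` satisfies the dissipation inequality
`d/dt V(x t) + ‖h(x t)‖² + ⟨u_V, R u_V⟩ ≤ γ² ‖w t‖²`.
Integrating over `[0, T]`, with `V(x 0) = 0` and `V(x T) ≥ 0`, bounds every partial integral of
the nonnegative cost by `γ² ∫₀^∞ ‖w‖²`, which gives integrability and the bound on `[0, ∞)`.
-/

open MeasureTheory Set Filter
open scoped RealInnerProductSpace

noncomputable def closedLoopCost {n m p : ℕ}
    (g : EuclideanSpace ℝ (Fin n) → Matrix (Fin n) (Fin m) ℝ)
    (h : EuclideanSpace ℝ (Fin n) → EuclideanSpace ℝ (Fin p))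
    (R : Matrix (Fin m) (Fin m) ℝ) (V : EuclideanSpace ℝ (Fin n) → ℝ)
    (y : EuclideanSpace ℝ (Fin n)) : ℝ :=
  ‖h y‖ ^ 2 + ⟪uPol g R V y, mv R (uPol g R V y)⟫

section LinearAlgebra

variable {a b c : ℕ}

lemma inner_mv_right (M : Matrix (Fin a) (Fin b) ℝ) (v : EuclideanSpace ℝ (Fin a))
    (u : EuclideanSpace ℝ (Fin b)) : ⟪v, mv M u⟫ = ⟪mv Mᵀ v, u⟫ := by
  simp only [mv, EuclideanSpace.inner_eq_star_dotProduct, star_trivial]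
  rw [Matrix.dotProduct_mulVec, Matrix.vecMul_transpose, dotProduct_comm]

lemma mv_mv (A : Matrix (Fin a) (Fin b) ℝ) (B : Matrix (Fin b) (Fin c) ℝ)
    (v : EuclideanSpace ℝ (Fin c)) : mv A (mv B v) = mv (A * B) v := by
  simp [mv, Matrix.mulVec_mulVec]

lemma mv_smul (M : Matrix (Fin a) (Fin b) ℝ) (r : ℝ) (v : EuclideanSpace ℝ (Fin b)) :
    mv M (r • v) = r • mv M v := by
  simp [mv, Matrix.mulVec_smul]

lemma mv_one (v : EuclideanSpace ℝ (Fin a)) : mv 1 v = v := by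
  simp [mv]

lemma Matrix.PosSemidef.inner_mv_self_nonneg {R : Matrix (Fin a) (Fin a) ℝ}
    (hR : R.PosSemidef) (u : EuclideanSpace ℝ (Fin a)) : 0 ≤ ⟪u, mv R u⟫ := by
  simpa [mv, EuclideanSpace.inner_eq_star_dotProduct, dotProduct_comm] using
    hR.re_dotProduct_nonneg u.ofLp

lemma continuous_mv {X : Type*} [TopologicalSpace X] {M : X → Matrix (Fin a) (Fin b) ℝ}
    {v : X → EuclideanSpace ℝ (Fin b)} (hM : Continuous M) (hv : Continuous v) :
    Continuous fun z => mv (M z) (v z) :=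
  (PiLp.continuous_toLp 2 _).comp (hM.matrix_mulVec ((PiLp.continuous_ofLp 2 _).comp hv))

end LinearAlgebra

section Hamiltonian

variable {n m q p : ℕ}
    (f : EuclideanSpace ℝ (Fin n) → EuclideanSpace ℝ (Fin n))
    (g : EuclideanSpace ℝ (Fin n) → Matrix (Fin n) (Fin m) ℝ)
    (k : EuclideanSpace ℝ (Fin n) → Matrix (Fin n) (Fin q) ℝ)
    (h : EuclideanSpace ℝ (Fin n) → EuclideanSpace ℝ (Fin p))
    {R : Matrix (Fin m) (Fin m) ℝ} {γ : ℝ} (V : EuclideanSpace ℝ (Fin n) → ℝ)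
    (y : EuclideanSpace ℝ (Fin n)) (w : EuclideanSpace ℝ (Fin q))

/-- `(u_V, w_V)` is a saddle point of the Hamiltonian, and the HJI equation says that its
saddle value is `0`. -/
lemma Ham_uPol_eq_of_HJIAt (hR : IsUnit R.det) (hγ : γ ≠ 0) (hy : HJIAt f g k h R γ V y) :
    Ham f g k h R γ V y (uPol g R V y) w = -(γ ^ 2 * ‖w - wPol k γ V y‖ ^ 2) := by
  set a := mv (g y)ᵀ (gradient V y)
  set b := mv (k y)ᵀ (gradient V y)
  have hu : uPol g R V y = (-(1 / 2 : ℝ)) • mv R⁻¹ a := rfl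
  have hw : wPol k γ V y = (1 / (2 * γ ^ 2)) • b := rfl
  have hRu : mv R (uPol g R V y) = (-(1 / 2 : ℝ)) • a := by
    rw [hu, mv_smul, mv_mv, Matrix.mul_nonsing_inv R hR, mv_one]
  have hgu : ⟪gradient V y, mv (g y) (uPol g R V y)⟫ = -(1 / 2) * ⟪a, mv R⁻¹ a⟫ := by
    rw [inner_mv_right, hu, real_inner_smul_right]
  have huRu : ⟪uPol g R V y, mv R (uPol g R V y)⟫ = 1 / 4 * ⟪a, mv R⁻¹ a⟫ := by
    rw [hRu, hu, real_inner_smul_left, real_inner_smul_right, real_inner_comm a]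
    ring
  have hkw : ⟪gradient V y, mv (k y) w⟫ = ⟪b, w⟫ := inner_mv_right _ _ _
  have hsq : ‖w - wPol k γ V y‖ ^ 2
      = ‖w‖ ^ 2 - 1 / γ ^ 2 * ⟪b, w⟫ + (1 / (2 * γ ^ 2)) ^ 2 * ‖b‖ ^ 2 := by
    rw [hw, norm_sub_sq_real, real_inner_smul_right, norm_smul, mul_pow,
      Real.norm_eq_abs, sq_abs, real_inner_comm w b]
    field_simp
  unfold HJIAt at hy
  rw [Ham, inner_add_right, inner_add_right, hgu, huRu, hkw, hsq]
  field_simp at hy ⊢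
  linear_combination 4 * hy

lemma inner_gradient_add_closedLoopCost_le (hR : IsUnit R.det) (hγ : γ ≠ 0)
    (hy : HJIAt f g k h R γ V y) :
    ⟪gradient V y, f y + mv (g y) (uPol g R V y) + mv (k y) w⟫ + closedLoopCost g h R V y
      ≤ γ ^ 2 * ‖w‖ ^ 2 := by
  have hHam := Ham_uPol_eq_of_HJIAt f g k h V y w hR hγ hy
  rw [Ham] at hHam
  unfold closedLoopCost
  nlinarith [sq_nonneg γ, sq_nonneg ‖w - wPol k γ V y‖]

end Hamiltonian

lemma closedLoopCost_nonneg {n m p : ℕ} (g : EuclideanSpace ℝ (Fin n) → Matrix (Fin n) (Fin m) ℝ)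
    (h : EuclideanSpace ℝ (Fin n) → EuclideanSpace ℝ (Fin p)) {R : Matrix (Fin m) (Fin m) ℝ}
    (hR : R.PosSemidef) (V : EuclideanSpace ℝ (Fin n) → ℝ) (y : EuclideanSpace ℝ (Fin n)) :
    0 ≤ closedLoopCost g h R V y :=
  add_nonneg (sq_nonneg _) (hR.inner_mv_self_nonneg _)

lemma ContDiff.continuous_gradient {F : Type*} [NormedAddCommGroup F] [InnerProductSpace ℝ F]
    [CompleteSpace F] {V : F → ℝ} (hV : ContDiff ℝ 1 V) : Continuous (gradient V) :=
  (InnerProductSpace.toDual ℝ F).symm.continuous.comp (hV.continuous_fderiv one_ne_zero)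

lemma HasGradientAt.comp_hasDerivAt {F : Type*} [NormedAddCommGroup F] [InnerProductSpace ℝ F]
    [CompleteSpace F] {V : F → ℝ} {V' : F} {x : ℝ → F} {v : F} {t : ℝ}
    (hV : HasGradientAt V V' (x t)) (hx : HasDerivAt x v t) : HasDerivAt (V ∘ x) ⟪V', v⟫ t := by
  simpa using hV.hasFDerivAt.comp_hasDerivAt t hx

lemma continuous_closedLoopCost {n m p : ℕ}
    {g : EuclideanSpace ℝ (Fin n) → Matrix (Fin n) (Fin m) ℝ}
    {h : EuclideanSpace ℝ (Fin n) → EuclideanSpace ℝ (Fin p)} {V : EuclideanSpace ℝ (Fin n) → ℝ}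
    (R : Matrix (Fin m) (Fin m) ℝ) (hg : Continuous g) (hh : Continuous h)
    (hV : Continuous (gradient V)) : Continuous (closedLoopCost g h R V) := by
  have hu : Continuous (uPol g R V) :=
    (continuous_mv (continuous_const (y := R⁻¹))
      (continuous_mv hg.matrix_transpose hV)).const_smul (-(1 / 2 : ℝ))
  exact (hh.norm.pow 2).add (hu.inner (continuous_mv continuous_const hu))

/-- Integrated dissipation inequality for a storage function `S` with supply rate `s`. -/
lemma sub_add_integral_le_integral_of_hasDerivAt {S S' c s : ℝ → ℝ} {a b : ℝ} (hab : a ≤ b)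
    (hS : ∀ t ∈ Icc a b, HasDerivAt S (S' t) t) (hdiss : ∀ t ∈ Ioo a b, S' t + c t ≤ s t)
    (hc : IntervalIntegrable c volume a b) (hs : IntervalIntegrable s volume a b) :
    S b - S a + ∫ t in a..b, c t ≤ ∫ t in a..b, s t := by
  have hsc : IntegrableOn (fun t => s t - c t) (Icc a b) :=
    (intervalIntegrable_iff_integrableOn_Icc_of_le hab).mp (hs.sub hc)
  have := intervalIntegral.sub_le_integral_of_hasDeriv_right_of_le hab
    (fun t ht => (hS t ht).continuousAt.continuousWithinAt)
    (fun t ht => (hS t (Ioo_subset_Icc_self ht)).hasDerivWithinAt) hsc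
    (fun t ht => le_sub_iff_add_le.mpr (hdiss t ht))
  rw [intervalIntegral.integral_sub hs hc] at this
  linarith

lemma intervalIntegral_le_setIntegral_Ici {f : ℝ → ℝ} {a b : ℝ} (hab : a ≤ b)
    (hf0 : ∀ t ∈ Ici a, 0 ≤ f t) (hf : IntegrableOn f (Ici a)) :
    ∫ t in a..b, f t ≤ ∫ t in Ici a, f t := by
  rw [intervalIntegral.integral_of_le hab]
  exact setIntegral_mono_set hf ((ae_restrict_iff' measurableSet_Ici).mpr
    (Eventually.of_forall hf0))
    (Eventually.of_forall (Ioc_subset_Ioi_self.trans Ioi_subset_Ici_self))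

lemma integrableOn_Ici_and_setIntegral_le_of_intervalIntegral_le {c : ℝ → ℝ} {a B : ℝ}
    (hc0 : ∀ t ∈ Ici a, 0 ≤ c t) (hc : LocallyIntegrableOn c (Ici a))
    (hB : ∀ b, a ≤ b → ∫ t in a..b, c t ≤ B) :
    IntegrableOn c (Ici a) ∧ ∫ t in Ici a, c t ≤ B := by
  have hloc : ∀ b, IntegrableOn c (Ioc a b) := fun b =>
    (hc.integrableOn_compact_subset Icc_subset_Ici_self isCompact_Icc).mono_set
      Ioc_subset_Icc_self
  have hnorm : ∀ b, a ≤ b → ∫ t in a..b, ‖c t‖ = ∫ t in a..b, c t := fun b hab =>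
    intervalIntegral.integral_congr fun t ht =>
      Real.norm_of_nonneg (hc0 t (by rw [uIcc_of_le hab] at ht; exact ht.1))
  have hIoi : IntegrableOn c (Ioi a) :=
    integrableOn_Ioi_of_intervalIntegral_norm_bounded B a hloc tendsto_id
      ((eventually_ge_atTop a).mono fun b hab => (hnorm b hab).trans_le (hB b hab))
  refine ⟨(integrableOn_Ici_iff_integrableOn_Ioi).mpr hIoi, ?_⟩
  rw [integral_Ici_eq_integral_Ioi]
  exact le_of_tendsto (intervalIntegral_tendsto_integral_Ioi a hIoi tendsto_id)
    ((eventually_ge_atTop a).mono hB)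

theorem infinite_horizon_l2_gain_general {n m q p : ℕ}
    (f : EuclideanSpace ℝ (Fin n) → EuclideanSpace ℝ (Fin n))
    (g : EuclideanSpace ℝ (Fin n) → Matrix (Fin n) (Fin m) ℝ)
    (k : EuclideanSpace ℝ (Fin n) → Matrix (Fin n) (Fin q) ℝ)
    (h : EuclideanSpace ℝ (Fin n) → EuclideanSpace ℝ (Fin p))
    (R : Matrix (Fin m) (Fin m) ℝ) (hR : R.PosDef)
    (γ : ℝ) (hγ : 0 < γ)
    (X : Set (EuclideanSpace ℝ (Fin n)))
    (V : EuclideanSpace ℝ (Fin n) → ℝ)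
    (hV : ContDiff ℝ 1 V)
    (hVnonneg : ∀ y ∈ X, 0 ≤ V y)
    (hHJI : ∀ y ∈ X, HJIAt f g k h R γ V y)
    (hg : Continuous g) (hh : Continuous h)
    (w : ℝ → EuclideanSpace ℝ (Fin q))
    (hwL2 : IntegrableOn (fun t => ‖w t‖^2) (Set.Ici (0:ℝ)))
    (x : ℝ → EuclideanSpace ℝ (Fin n))
    (hxX : ∀ t ∈ Set.Ici (0:ℝ), x t ∈ X)
    (hx : ∀ t ∈ Set.Ici (0:ℝ), HasDerivAt x
      (f (x t) + mv (g (x t)) (uPol g R V (x t)) + mv (k (x t)) (w t)) t)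
    (hx0 : V (x 0) = 0) :
    IntegrableOn
        (fun t => ‖h (x t)‖^2 + (inner ℝ (uPol g R V (x t)) (mv R (uPol g R V (x t))) : ℝ))
        (Set.Ici (0:ℝ))
      ∧ ∫ t in Set.Ici (0:ℝ),
            (‖h (x t)‖^2 + (inner ℝ (uPol g R V (x t)) (mv R (uPol g R V (x t))) : ℝ))
          ≤ γ^2 * ∫ t in Set.Ici (0:ℝ), ‖w t‖^2 := by
  change IntegrableOn (fun t => closedLoopCost g h R V (x t)) (Ici 0)
    ∧ ∫ t in Ici 0, closedLoopCost g h R V (x t) ≤ _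
  have hxc : ContinuousOn x (Ici 0) := fun t ht => (hx t ht).continuousAt.continuousWithinAt
  have hcost : ContinuousOn (fun t => closedLoopCost g h R V (x t)) (Ici 0) :=
    (continuous_closedLoopCost R hg hh hV.continuous_gradient).comp_continuousOn hxc
  refine integrableOn_Ici_and_setIntegral_le_of_intervalIntegral_le
    (fun t _ => closedLoopCost_nonneg g h hR.posSemidef V (x t))
    (hcost.locallyIntegrableOn measurableSet_Ici) fun T hT => ?_
  have hsub : Icc 0 T ⊆ Ici 0 := Icc_subset_Ici_self
  have hdiss := sub_add_integral_le_integral_of_hasDerivAt hT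
    (fun t ht => ((hV.differentiable one_ne_zero) (x t)).hasGradientAt.comp_hasDerivAt
      (hx t (hsub ht)))
    (fun t ht => inner_gradient_add_closedLoopCost_le f g k h V (x t) (w t)
      hR.det_pos.ne'.isUnit hγ.ne' (hHJI _ (hxX t (hsub (Ioo_subset_Icc_self ht)))))
    ((hcost.mono hsub).intervalIntegrable_of_Icc hT)
    (((intervalIntegrable_iff_integrableOn_Icc_of_le hT).mpr (hwL2.mono_set hsub)).const_mul _)
  have hVT : 0 ≤ V (x T) := hVnonneg _ (hxX T hT)
  calc ∫ t in 0..T, closedLoopCost g h R V (x t)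
      ≤ ∫ t in 0..T, γ ^ 2 * ‖w t‖ ^ 2 := by
        simp only [Function.comp_apply, hx0] at hdiss; linarith
    _ = γ ^ 2 * ∫ t in 0..T, ‖w t‖ ^ 2 := intervalIntegral.integral_const_mul _ _
    _ ≤ γ ^ 2 * ∫ t in Ici 0, ‖w t‖ ^ 2 := by
        gcongr
        exact intervalIntegral_le_setIntegral_Ici hT (fun t _ => sq_nonneg _) hwL2

/-- **Infinite-horizon L₂-gain of the closed loop (gain part of Lemma 1).**  Under the HJI
equation, along a closed-loop trajectory starting with `V(x 0) = 0` and an `L₂`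
disturbance, the cost `t ↦ ‖h(x t)‖² + ⟨u_V(x t), R u_V(x t)⟩` is integrable on `[0,∞)` and
its integral is at most `γ² ∫₀^∞ ‖w t‖² dt`: the closed loop has `L₂`-gain `≤ γ`. -/
theorem infinite_horizon_l2_gain {n m q p : ℕ}
    (f : EuclideanSpace ℝ (Fin n) → EuclideanSpace ℝ (Fin n))
    (g : EuclideanSpace ℝ (Fin n) → Matrix (Fin n) (Fin m) ℝ)
    (k : EuclideanSpace ℝ (Fin n) → Matrix (Fin n) (Fin q) ℝ)
    (h : EuclideanSpace ℝ (Fin n) → EuclideanSpace ℝ (Fin p))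
    (R : Matrix (Fin m) (Fin m) ℝ) (hR : R.PosDef)
    (γ : ℝ) (hγ : 0 < γ)
    (X : Set (EuclideanSpace ℝ (Fin n)))
    (V : EuclideanSpace ℝ (Fin n) → ℝ)
    (hV : ContDiff ℝ 1 V)
    (hVnonneg : ∀ y ∈ X, 0 ≤ V y)
    (hHJI : ∀ y ∈ X, HJIAt f g k h R γ V y)
    (hf : Continuous f) (hg : Continuous g) (hk : Continuous k) (hh : Continuous h)
    (w : ℝ → EuclideanSpace ℝ (Fin q)) (hw : ContinuousOn w (Set.Ici (0:ℝ)))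
    (hwL2 : IntegrableOn (fun t => ‖w t‖^2) (Set.Ici (0:ℝ)))
    (x : ℝ → EuclideanSpace ℝ (Fin n))
    (hxX : ∀ t ∈ Set.Ici (0:ℝ), x t ∈ X)
    (hx : ∀ t ∈ Set.Ici (0:ℝ), HasDerivAt x
      (f (x t) + mv (g (x t)) (uPol g R V (x t)) + mv (k (x t)) (w t)) t)
    (hx0 : V (x 0) = 0) :
    IntegrableOn
        (fun t => ‖h (x t)‖^2 + (inner ℝ (uPol g R V (x t)) (mv R (uPol g R V (x t))) : ℝ))
        (Set.Ici (0:ℝ))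
      ∧ ∫ t in Set.Ici (0:ℝ),
            (‖h (x t)‖^2 + (inner ℝ (uPol g R V (x t)) (mv R (uPol g R V (x t))) : ℝ))
          ≤ γ^2 * ∫ t in Set.Ici (0:ℝ), ‖w t‖^2 :=
  infinite_horizon_l2_gain_general f g k h R hR γ hγ X V hV hVnonneg hHJI hg hh w hwL2 x hxX hx hx0
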